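/- Let p ∈ (0,1) and let 𝓗 = (H, ξ) be a signed hypergraph. For each e ∈ E(H) let B(e) be an H-dominating base over e, and let 𝖡(e) = (r, e, ι_e, B(e), d^{H_+}(e), {d^{H_+}_b(e)}_{b∈B(e)}) be the induced weighted base with weights taken from H_+. With 𝔅 = {𝖡(e)}_{e∈E(H)} and the associated seminorm ‖·‖*_𝔅, let C ⊆ A_{n,r} be a set of diameter at most ε p under ‖·‖*_𝔅 for some ε ∈ (0,1], and assume there exist Q₀ ∈ conv(C) and L ≥ 1 such that hom(𝓗', Q₀) ≤ L n^{v(H')} p^{e(H'_+)} for every signed subgraph 𝓗' ⊊ 𝓗. Then there is a constant C(𝓗), depending only on 𝓗, such that for all collections P = (P^e)_{e∈E(H)} and Q = (Q^e)_{e∈E(H)} with every P^e, Q^e ∈ conv(C): |hom(𝓗, P) − hom(𝓗, Q)| ≤ C(𝓗) L ε n^{v(H)} p^{e(H_+)}. -/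

import Mathlib

open scoped Classical
open Finset

/-! ### Tensors -/

/-- Order-`r` tensors of size `n`. -/
abbrev Tensor (n r : ℕ) : Type := (Fin r → Fin n) → ℝ

/-- `r`-element subsets of `[n]`. -/
abbrev Idx (n r : ℕ) := {I : Finset (Fin n) // I.card = r}

/-- Evaluation of a tensor at an `r`-element subset, via the monotone enumeration. -/
noncomputable def setEval {n r : ℕ} (Z : Tensor n r) (I : Idx n r) : ℝ :=
  Z fun k => ((I.1.orderIsoOfFin I.2) k).1

/-- Symmetric Boolean tensors supported on injective tuples (adjacency tensors). -/
def adjSet (n r : ℕ) : Set (Tensor n r) :=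
  {A | (∀ (σ : Equiv.Perm (Fin r)) (x : Fin r → Fin n), A (x ∘ σ) = A x) ∧
    (∀ x, A x = 0 ∨ A x = 1) ∧ ∀ x, ¬Function.Injective x → A x = 0}

/-- Symmetric `[0,1]`-valued tensors supported on injective tuples. -/
def wtSet (n r : ℕ) : Set (Tensor n r) :=
  {Q | (∀ (σ : Equiv.Perm (Fin r)) (x : Fin r → Fin n), Q (x ∘ σ) = Q x) ∧
    (∀ x, 0 ≤ Q x ∧ Q x ≤ 1) ∧ ∀ x, ¬Function.Injective x → Q x = 0}

/-- The tensor equal to `1` whenever all coordinates are distinct and `0` otherwise. -/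
noncomputable def Jten (n r : ℕ) : Tensor n r := fun x => if Function.Injective x then 1 else 0

/-! ### Random hypergraphs -/

/-- A selection of hyperedges: a Boolean function on `r`-element subsets of `[n]`. -/
abbrev EdgeSel (n r : ℕ) := Idx n r → Bool

/-- The adjacency tensor of a hyperedge selection. -/
noncomputable def adjOf {n r : ℕ} (ω : EdgeSel n r) : Tensor n r := fun x =>
  if h : Function.Injective x then
    (if ω ⟨Finset.image x Finset.univ, by
        rw [Finset.card_image_of_injective _ h, Finset.card_univ, Fintype.card_fin]⟩
      then 1 else 0)
  else 0

/-- The product-Bernoulli weight of a hyperedge selection, with success probability `Q(I)`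
for the edge `I`. -/
noncomputable def wWeight {n r : ℕ} (Q : Tensor n r) (ω : EdgeSel n r) : ℝ :=
  ∏ I : Idx n r, if ω I then setEval Q I else 1 - setEval Q I

/-- Probability of a set of tensors under the inhomogeneous Erdős–Rényi measure `μ_Q`. -/
noncomputable def muQ (n r : ℕ) (Q : Tensor n r) (E : Set (Tensor n r)) : ℝ :=
  ∑ ω : EdgeSel n r, if adjOf ω ∈ E then wWeight Q ω else 0

/-- Probability of a set of tensors under the Erdős–Rényi measure `μ_p`. -/
noncomputable def muP (n r : ℕ) (p : ℝ) : Set (Tensor n r) → ℝ := muQ n r fun _ => p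

/-- Expectation of a functional of the adjacency tensor under `μ_Q`. -/
noncomputable def expQ (n r : ℕ) (Q : Tensor n r) (f : Tensor n r → ℝ) : ℝ :=
  ∑ ω : EdgeSel n r, wWeight Q ω * f (adjOf ω)

/-- Variance of a functional of the adjacency tensor under `μ_Q`. -/
noncomputable def varQ (n r : ℕ) (Q : Tensor n r) (f : Tensor n r → ℝ) : ℝ :=
  expQ n r Q fun A => (f A - expQ n r Q f) ^ 2

/-! ### Relative entropy -/

/-- Relative entropy of Bernoulli(x) with respect to Bernoulli(p). -/
noncomputable def entBer (p x : ℝ) : ℝ :=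
  x * Real.log (x / p) + (1 - x) * Real.log ((1 - x) / (1 - p))

/-- `I_p(Q)`, the relative entropy of `μ_Q` with respect to `μ_p`. -/
noncomputable def entRate (n r : ℕ) (p : ℝ) (Q : Tensor n r) : ℝ :=
  ∑ I : Idx n r, entBer p (setEval Q I)

/-! ### Weighted bases and test tensors -/

/-- The data of a weighted base over an `r`-element set (identified with `Fin r` via the
bijection `ι`). -/
structure WBase (r : ℕ) where
  B : Finset (Finset (Fin r))
  dstar : ℕ
  d : Finset (Fin r) → ℕ

/-- The axioms of a weighted base: `∅ ∈ B`, members are proper subsets, nonempty members are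
pairwise incomparable, and the weights satisfy `d_b ≤ d_*`, `d_∅ = 0`. -/
def WBase.Valid {r : ℕ} (Bw : WBase r) : Prop :=
  ∅ ∈ Bw.B ∧ (∀ b ∈ Bw.B, b ≠ Finset.univ) ∧
    (∀ b₁ ∈ Bw.B, ∀ b₂ ∈ Bw.B, b₁.Nonempty → b₂.Nonempty → b₁ ≠ b₂ → ¬b₁ ⊆ b₂) ∧
    (∀ b ∈ Bw.B, Bw.d b ≤ Bw.dstar) ∧ Bw.d ∅ = 0

/-- A system of Boolean factors, one for each subset of coordinates. -/
abbrev Factors (n r : ℕ) := (b : Finset (Fin r)) → ({v : Fin r // v ∈ b} → Fin n) → Bool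

/-- The test tensor with factor system `f`: the entrywise product over `b ∈ B` of the Boolean
tensors `t_b ∘ π_b`. -/
noncomputable def testFun {n r : ℕ} (Bw : WBase r) (f : Factors n r) : Tensor n r := fun x =>
  ∏ b ∈ Bw.B, if f b (fun v => x v.1) then (1 : ℝ) else 0

/-- `‖t_b‖₁`, the number of inputs on which the factor `t_b` equals one. -/
noncomputable def facNorm1 {n r : ℕ} (f : Factors n r) (b : Finset (Fin r)) : ℝ :=
  ((Finset.univ.filter fun y : {v : Fin r // v ∈ b} → Fin n => f b y = true).card : ℝ)

/-- The norm `‖T‖_Bw` of a test tensor, presented by its factor system. -/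
noncomputable def testNorm {n r : ℕ} (p : ℝ) (Bw : WBase r) (f : Factors n r) : ℝ :=
  max (∑ x : Fin r → Fin n, |testFun Bw f x|)
    (⨆ b ∈ Bw.B, (n : ℝ) ^ (r - b.card) * p ^ (Bw.dstar - Bw.d b) * facNorm1 f b)

/-- The dual seminorm `‖Z‖*_Bw = max_{T ∈ T_Bw} |⟨Z,T⟩| / ‖T‖_Bw`. -/
noncomputable def dualNorm {r : ℕ} (n : ℕ) (p : ℝ) (Bw : WBase r) (Z : Tensor n r) : ℝ :=
  ⨆ f : Factors n r,
    if ∃ x, testFun Bw f x ≠ 0 then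
      |∑ x : Fin r → Fin n, Z x * testFun Bw f x| / testNorm p Bw f
    else 0

/-- `W_{n,p}(Bw) = min_{b ∈ B} n^{r-|b|} p^{d_* - d_b + 2}`. -/
noncomputable def Wnp (n : ℕ) {r : ℕ} (p : ℝ) (Bw : WBase r) : ℝ :=
  sInf ((fun b => (n : ℝ) ^ (r - b.card) * p ^ (Bw.dstar - Bw.d b + 2)) '' ↑Bw.B)

/-! ### Families of weighted bases -/

/-- `‖Z‖*_BB = max_e ‖Z‖*_{Bw(e)}` for a finite family of weighted bases. -/
noncomputable def famDual {r m : ℕ} (n : ℕ) (p : ℝ) (BB : Fin m → WBase r)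
    (Z : Tensor n r) : ℝ :=
  ⨆ i, dualNorm n p (BB i) Z

/-- `W_{n,p}(BB) = min_e W_{n,p}(Bw(e))` for a finite family of weighted bases. -/
noncomputable def famW {r m : ℕ} (n : ℕ) (p : ℝ) (BB : Fin m → WBase r) : ℝ :=
  ⨅ i, Wnp n p (BB i)

/-- `U_BB(Q, δ)`, the `δ`-neighborhood of `Q` in `A_{n,r}` under `‖·‖*_BB`. -/
def nbhdFam {r m n : ℕ} (p δ : ℝ) (BB : Fin m → WBase r) (Q : Tensor n r) :
    Set (Tensor n r) :=
  {A | A ∈ adjSet n r ∧ famDual n p BB (fun x => Q x - A x) ≤ δ}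

/-- The outer approximation `(E)_{BB,δ} = ⋃_{A ∈ E} conv(U_BB(A,δ))`. -/
def outerFam {r m n : ℕ} (p δ : ℝ) (BB : Fin m → WBase r) (E : Set (Tensor n r)) :
    Set (Tensor n r) :=
  ⋃ A ∈ E, convexHull ℝ (nbhdFam p δ BB A)

/-- The inner approximation `(E)°_{BB,δ} = {Q ∈ Q_{n,r} : U_BB(Q,δ) ⊆ E}`. -/
def innerFam {r m n : ℕ} (p δ : ℝ) (BB : Fin m → WBase r) (E : Set (Tensor n r)) :
    Set (Tensor n r) :=
  {Q | Q ∈ wtSet n r ∧ nbhdFam p δ BB Q ⊆ E}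

/-! ### Hypergraphs -/

/-- An `r`-uniform hypergraph: a finite vertex type and a finite set of `r`-element edges. -/
structure RGraph (r : ℕ) where
  V : Type
  [fV : Fintype V]
  [dV : DecidableEq V]
  E : Finset (Finset V)
  card_edge : ∀ e ∈ E, e.card = r

attribute [instance] RGraph.fV RGraph.dV

/-- Evaluation `S(φ(e))` of a tensor at the image of an edge (zero if `φ` is not injective
on the edge). -/
noncomputable def edgeEval {n r : ℕ} {V : Type} [DecidableEq V] (Z : Tensor n r)
    (φ : V → Fin n) (e : Finset V) : ℝ :=
  if h : (e.image φ).card = r then setEval Z ⟨e.image φ, h⟩ else 0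

/-- Homomorphism count of the subgraph of `H` with edge set `E₀` (on the full vertex set). -/
noncomputable def homE {n r : ℕ} (H : RGraph r) (E₀ : Finset (Finset H.V))
    (Q : Tensor n r) : ℝ :=
  ∑ φ : H.V → Fin n, ∏ e ∈ E₀, edgeEval Q φ e

/-- `hom(H, Q)`. -/
noncomputable def homR {n r : ℕ} (H : RGraph r) (Q : Tensor n r) : ℝ := homE H H.E Q

/-- `t(H, Q) = hom(H,Q) / n^{v(H)}`. -/
noncomputable def tR {n r : ℕ} (H : RGraph r) (Q : Tensor n r) : ℝ :=
  homR H Q / (n : ℝ) ^ Fintype.card H.V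

/-- `t_p(H, Q) = hom(H,Q) / (n^{v(H)} p^{e(H)})`. -/
noncomputable def tp {n r : ℕ} (H : RGraph r) (p : ℝ) (Q : Tensor n r) : ℝ :=
  homR H Q / ((n : ℝ) ^ Fintype.card H.V * p ^ H.E.card)

/-- Multilinear homomorphism count for a collection of tensors indexed by the edges. -/
noncomputable def homColl {n r : ℕ} (H : RGraph r) (S : {e // e ∈ H.E} → Tensor n r) : ℝ :=
  ∑ φ : H.V → Fin n, ∏ e : {e // e ∈ H.E}, edgeEval (S e) φ e.1

/-- Normalized multilinear homomorphism count. -/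
noncomputable def tpColl {n r : ℕ} (H : RGraph r) (p : ℝ)
    (S : {e // e ∈ H.E} → Tensor n r) : ℝ :=
  homColl H S / ((n : ℝ) ^ Fintype.card H.V * p ^ H.E.card)

/-- Signed multilinear homomorphism count: positive edges contribute `S^e(φ(e))`,
negative edges contribute `1 - S^e(φ(e))`. -/
noncomputable def shomColl {n r : ℕ} (H : RGraph r) (sgn : Finset H.V → Bool)
    (S : {e // e ∈ H.E} → Tensor n r) : ℝ :=
  ∑ φ : H.V → Fin n, ∏ e : {e // e ∈ H.E},
    if sgn e.1 then edgeEval (S e) φ e.1 else 1 - edgeEval (S e) φ e.1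

/-- Signed homomorphism count of the subgraph with edge set `E₀`, with a single tensor. -/
noncomputable def shomE {n r : ℕ} (H : RGraph r) (sgn : Finset H.V → Bool)
    (E₀ : Finset (Finset H.V)) (Q : Tensor n r) : ℝ :=
  ∑ φ : H.V → Fin n, ∏ e ∈ E₀, (if sgn e then edgeEval Q φ e else 1 - edgeEval Q φ e)

/-! ### Degrees -/

/-- Degree of a vertex. -/
def vdeg {r : ℕ} (H : RGraph r) (v : H.V) : ℕ := (H.E.filter fun e => v ∈ e).card

/-- Maximum degree `Δ(H)`. -/
def maxDeg {r : ℕ} (H : RGraph r) : ℕ := Finset.univ.sup fun v => vdeg H v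

/-- Maximum degree with respect to a subset of the edges. -/
def maxDegOn {r : ℕ} (H : RGraph r) (E₀ : Finset (Finset H.V)) : ℕ :=
  Finset.univ.sup fun v : H.V => (E₀.filter fun e => v ∈ e).card

/-- `d^H(U)`: the number of edges `e' ≠ U` meeting `U`. -/
def edeg {V : Type} [DecidableEq V] (E₀ : Finset (Finset V)) (U : Finset V) : ℕ :=
  (E₀.filter fun e' => e' ≠ U ∧ (e' ∩ U).Nonempty).card

/-- `d^H_b(U)`: the number of edges `e'` with `∅ ≠ e' ∩ U ⊆ b`. -/
def edegSub {V : Type} [DecidableEq V] (E₀ : Finset (Finset V)) (b U : Finset V) : ℕ :=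
  (E₀.filter fun e' => (e' ∩ U).Nonempty ∧ e' ∩ U ⊆ b).card

/-! ### Base systems over a hypergraph -/

/-- The data of a base system over `H`: for each edge, an identification of `Fin r` with the
edge and a base of subsets of `Fin r`. -/
structure BaseSystem {r : ℕ} (H : RGraph r) where
  emb : (e : {e // e ∈ H.E}) → Fin r → H.V
  emb_inj : ∀ e, Function.Injective (emb e)
  emb_mem : ∀ e (k : Fin r), emb e k ∈ e.1
  B : (e : {e // e ∈ H.E}) → Finset (Finset (Fin r))

/-- The image in the vertex set of a subset of coordinates. -/
def BaseSystem.vimage {r : ℕ} {H : RGraph r} (S : BaseSystem H) (e : {e // e ∈ H.E})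
    (b : Finset (Fin r)) : Finset H.V :=
  b.image (S.emb e)

/-- Validity plus `H`-domination of a base system: each base satisfies the base axioms and
every overlap `e ∩ e'` is contained in (the image of) some member of the base. -/
def BaseSystem.Good {r : ℕ} {H : RGraph r} (S : BaseSystem H) : Prop :=
  ∀ e : {e // e ∈ H.E},
    ∅ ∈ S.B e ∧ (∀ b ∈ S.B e, b ≠ Finset.univ) ∧
      (∀ b₁ ∈ S.B e, ∀ b₂ ∈ S.B e, b₁.Nonempty → b₂.Nonempty → b₁ ≠ b₂ → ¬b₁ ⊆ b₂) ∧
      (∀ e' ∈ H.E, e' ≠ e.1 → ∃ b ∈ S.B e, e' ∩ e.1 ⊆ S.vimage e b)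

/-- The weighted base at an edge `e`, with weights given by the degree counts of `E₀`
(`d_* = d^{E₀}(e)`, `d_b = d^{E₀}_b(e)`). -/
def BaseSystem.wb {r : ℕ} {H : RGraph r} (S : BaseSystem H) (E₀ : Finset (Finset H.V))
    (e : {e // e ∈ H.E}) : WBase r :=
  { B := S.B e
    dstar := edeg E₀ e.1
    d := fun b => edegSub E₀ (S.vimage e b) e.1 }

/-- The seminorm `‖Z‖*_BB = max_{e ∈ E(H)} ‖Z‖*_{Bw(e)}` of a base system with weights
from `E₀`. -/
noncomputable def bsDualNorm {n r : ℕ} {H : RGraph r} (S : BaseSystem H)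
    (E₀ : Finset (Finset H.V)) (p : ℝ) (Z : Tensor n r) : ℝ :=
  ⨆ e : {e // e ∈ H.E}, dualNorm n p (S.wb E₀ e) Z

/-- `W_{n,p}(BB) = min_{e ∈ E(H)} W_{n,p}(Bw(e))` for a base system. -/
noncomputable def bsW {r : ℕ} {H : RGraph r} (S : BaseSystem H)
    (E₀ : Finset (Finset H.V)) (n : ℕ) (p : ℝ) : ℝ :=
  ⨅ e : {e // e ∈ H.E}, Wnp n p (S.wb E₀ e)

/-! ### Variational problems -/

/-- The upper-tail variational problem `Φ_{n,p}(H, u)`. -/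
noncomputable def Phi {r : ℕ} (H : RGraph r) (n : ℕ) (p u : ℝ) : ℝ :=
  sInf {x : ℝ | ∃ Q ∈ wtSet n r, tR H Q ≥ (1 + u) * p ^ H.E.card ∧ x = entRate n r p Q}

/-- The lower-tail variational problem `Ψ_{n,p}(H, u)`. -/
noncomputable def Psi {r : ℕ} (H : RGraph r) (n : ℕ) (p u : ℝ) : ℝ :=
  sInf {x : ℝ | ∃ Q ∈ wtSet n r, tR H Q ≤ (1 - u) * p ^ H.E.card ∧ x = entRate n r p Q}

/-! ### The parameter Δ'(H) -/

/-- A dominating base for the edge `e` of `H`, as a collection of vertex subsets. -/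
def IsDomBase {r : ℕ} (H : RGraph r) (e : Finset H.V) (B : Finset (Finset H.V)) : Prop :=
  ∅ ∈ B ∧ (∀ b ∈ B, b ⊆ e ∧ b ≠ e) ∧
    (∀ b₁ ∈ B, ∀ b₂ ∈ B, b₁.Nonempty → b₂.Nonempty → b₁ ≠ b₂ → ¬b₁ ⊆ b₂) ∧
    ∀ e' ∈ H.E, e' ≠ e → ∃ b ∈ B, e' ∩ e ⊆ b

/-- `d'_b(e)`. -/
noncomputable def dpb {r : ℕ} (H : RGraph r) (e b : Finset H.V) : ℝ :=
  if b = ∅ then ((edeg H.E e : ℝ) + 2) / (r : ℝ)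
  else ((edeg H.E (e \ b) : ℝ) + 1) / ((e \ b).card : ℝ)

/-- `d'_B(e) = max_{b ∈ B} d'_b(e)`. -/
noncomputable def dpBase {r : ℕ} (H : RGraph r) (e : Finset H.V)
    (B : Finset (Finset H.V)) : ℝ :=
  sSup (dpb H e '' ↑B)

/-- `d'(e)`: minimum over dominating bases. -/
noncomputable def dprime {r : ℕ} (H : RGraph r) (e : Finset H.V) : ℝ :=
  sInf {x : ℝ | ∃ B, IsDomBase H e B ∧ x = dpBase H e B}

/-- `Δ'(H) = max_{e ∈ E(H)} d'(e)`. -/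
noncomputable def DeltaPrime {r : ℕ} (H : RGraph r) : ℝ :=
  sSup (dprime H '' ↑H.E)

/-! ### Cut matrices (the case r = 2) -/

/-- The cut matrix `1_I ⊗ 1_J`, as a 2-tensor. -/
noncomputable def cut2 {n : ℕ} (I J : Finset (Fin n)) : Tensor n 2 := fun x =>
  if x 0 ∈ I ∧ x 1 ∈ J then 1 else 0

/-- `‖1_I ⊗ 1_J‖_{Δ,2} = (|I| ∨ n₀)(|J| ∨ n₀)` with `n₀ = n p^{Δ-1}`. -/
noncomputable def cutNormIJ (n : ℕ) (p : ℝ) (Δ : ℕ) (I J : Finset (Fin n)) : ℝ :=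
  max (I.card : ℝ) ((n : ℝ) * p ^ (Δ - 1)) * max (J.card : ℝ) ((n : ℝ) * p ^ (Δ - 1))

/-- The dual norm `‖M‖*_{Δ,2}`. -/
noncomputable def cutDual (n : ℕ) (p : ℝ) (Δ : ℕ) (M : Tensor n 2) : ℝ :=
  ⨆ I : Finset (Fin n), ⨆ J : Finset (Fin n),
    |∑ x : Fin 2 → Fin n, M x * cut2 I J x| / cutNormIJ n p Δ I J

/-! ### The class S(G) -/

/-- `G' ∈ S(G)`: there is a surjection from `V(G)` onto `V(G')`, injective on each edge,
mapping the edge set of `G` onto that of `G'`. -/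
def InSclass {r : ℕ} (G G' : RGraph r) : Prop :=
  ∃ Ψ : G.V → G'.V, Function.Surjective Ψ ∧ (∀ e ∈ G.E, Set.InjOn Ψ ↑e) ∧
    G'.E = G.E.image fun e => e.image Ψ

/-- The maximum degree of the positive part `H₊` of a signed hypergraph. -/
def posDeg {r : ℕ} (H : RGraph r) (sgn : Finset H.V → Bool) : ℕ :=
  maxDegOn H (H.E.filter fun e => sgn e = true)

/-!
Telescoping over the edges reduces the claim to two collections that differ only at one edge
`e₀`, and by multilinearity the other edges may be assumed to carry adjacency tensors from `C`.
Once the values of a homomorphism off `e₀` are fixed, the product over the other edges is a test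
tensor of the base `B(e₀)`: by `H`-domination each trace `e ∩ e₀` lies in some `b ∈ B(e₀)`, and
the factor `t_b` collects the edges whose trace lies in `b`. Pairing with the difference of the
two tensors at `e₀` costs `ε p` times the norm of the test tensor, and summing these norms over
the values off `e₀` produces homomorphism counts of proper subgraphs, weighted by `p^{d_* - d_b}`.
Those counts are within the bound of the corresponding counts for `Q₀` by induction on the number
of edges, and the exponents add up to `e(H₊)` since every positive edge meeting `e₀` but not
inside `b` is counted by `d_* - d_b`.
-/

open Function
open scoped Pointwise

lemma prod_eq_ite_of_zero_or_one {ι : Type*} {s : Finset ι} {f : ι → ℝ}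
    (h : ∀ i ∈ s, f i = 0 ∨ f i = 1) :
    ∏ i ∈ s, f i = if ∀ i ∈ s, f i = 1 then 1 else 0 := by
  rw [← prod_boole]
  refine prod_congr rfl fun i hi => ?_
  rcases h i hi with h | h <;> simp [h]

lemma convex_setOf_abs_le {E : Type*} [AddCommGroup E] [Module ℝ E] {f : E → ℝ}
    (hf : ∀ x y (a b : ℝ), a + b = 1 → f (a • x + b • y) = a * f x + b * f y) (M : ℝ) :
    Convex ℝ {x | |f x| ≤ M} := by
  intro x hx y hy a b ha hb hab
  change |f x| ≤ M at hx
  change |f y| ≤ M at hy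
  calc |f (a • x + b • y)| ≤ |a * f x| + |b * f y| := by rw [hf x y a b hab]; exact abs_add_le _ _
    _ = a * |f x| + b * |f y| := by rw [abs_mul, abs_mul, abs_of_nonneg ha, abs_of_nonneg hb]
    _ ≤ a * M + b * M := by gcongr
    _ = M := by rw [← add_mul, hab, one_mul]

lemma abs_map_sub_le_of_mem_convexHull {E : Type*} [AddCommGroup E] [Module ℝ E]
    (ℓ : E →ₗ[ℝ] ℝ) {s : Set E} {M : ℝ} (hs : ∀ a ∈ s, ∀ b ∈ s, |ℓ (a - b)| ≤ M)
    {x y : E} (hx : x ∈ convexHull ℝ s) (hy : y ∈ convexHull ℝ s) : |ℓ (x - y)| ≤ M := by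
  have hxy : x - y ∈ convexHull ℝ (s - s) := by
    rw [convexHull_sub]
    exact Set.sub_mem_sub hx hy
  refine convexHull_min ?_ (convex_setOf_abs_le (f := ℓ) (fun u v a b _ => by simp) M) hxy
  rintro _ ⟨a, ha, b, hb, rfl⟩
  exact hs a ha b hb

lemma exists_perm_eq_comp_of_range_eq {α β : Type*} {f g : α → β} (hf : Injective f)
    (hg : Injective g) (h : Set.range f = Set.range g) : ∃ σ : Equiv.Perm α, f = g ∘ σ :=
  ⟨(Equiv.ofInjective f hf).trans ((Equiv.setCongr h).trans (Equiv.ofInjective g hg).symm),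
    funext fun a => by simp [Equiv.apply_ofInjective_symm]⟩

lemma sum_comp_restrict {α β : Type*} [Fintype α] [DecidableEq α] [Fintype β] (s : Finset α)
    (h : ({a // a ∈ s} → β) → ℝ) :
    ∑ x : α → β, h (fun a => x a.1) =
      (Fintype.card β : ℝ) ^ (Fintype.card α - #s) * ∑ y, h y := by
  rw [← (Equiv.piEquivPiSubtypeProd (· ∈ s) fun _ => β).symm.sum_comp, Fintype.sum_prod_type,
    mul_sum]
  refine sum_congr rfl fun y _ => ?_
  have hy : ∀ z, (fun a : {a // a ∈ s} =>
      (Equiv.piEquivPiSubtypeProd (· ∈ s) fun _ => β).symm (y, z) a.1) = y := fun z => by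
    funext a
    simp [Equiv.piEquivPiSubtypeProd_symm_apply, a.2]
  simp only [hy, sum_const, card_univ, Fintype.card_fun, Fintype.card_subtype_compl,
    Fintype.card_coe, nsmul_eq_mul]
  push_cast
  ring

lemma exists_glue_of_injective {V β : Type*} [Fintype V] [DecidableEq V] [Fintype β] {r : ℕ}
    {k : Fin r → V} (hk : Injective k) :
    ∃ glue : (Fin r → β) → ({v // v ∉ Set.range k} → β) → V → β,
      (∀ x ψ, glue x ψ ∘ k = x) ∧ (∀ x ψ v (hv : v ∉ Set.range k), glue x ψ v = ψ ⟨v, hv⟩) ∧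
      ∀ G : (V → β) → ℝ, ∑ φ, G φ = ∑ ψ, ∑ x, G (glue x ψ) := by
  let Φ : (V → β) ≃ (Fin r → β) × ({v // v ∉ Set.range k} → β) :=
    (Equiv.piEquivPiSubtypeProd (· ∈ Set.range k) fun _ => β).trans
      (Equiv.prodCongr (Equiv.arrowCongr (Equiv.ofInjective k hk).symm (Equiv.refl β))
        (Equiv.refl _))
  have hΦ : ∀ φ, Φ φ = (φ ∘ k, fun v => φ v.1) := fun φ => rfl
  refine ⟨fun x ψ => Φ.symm (x, ψ), fun x ψ => ?_, fun x ψ v hv => ?_, fun G => ?_⟩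
  · simpa [hΦ] using congrArg Prod.fst (Φ.apply_symm_apply (x, ψ))
  · simpa [hΦ] using congrFun (congrArg Prod.snd (Φ.apply_symm_apply (x, ψ))) ⟨v, hv⟩
  · rw [← Φ.symm.sum_comp, Fintype.sum_prod_type, sum_comm]

lemma adjSet_subset_wtSet {n r : ℕ} : adjSet n r ⊆ wtSet n r := by
  rintro A ⟨hsymm, h01, hvan⟩
  refine ⟨hsymm, fun x => ?_, hvan⟩
  rcases h01 x with h | h <;> simp [h]

lemma convex_wtSet {n r : ℕ} : Convex ℝ (wtSet n r) := by
  rintro Q₁ ⟨hs₁, hb₁, hv₁⟩ Q₂ ⟨hs₂, hb₂, hv₂⟩ a b ha hb hab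
  refine ⟨fun σ x => ?_, fun x => ?_, fun x hx => ?_⟩
  · simp only [Pi.add_apply, Pi.smul_apply, smul_eq_mul, hs₁ σ x, hs₂ σ x]
  · simp only [Pi.add_apply, Pi.smul_apply, smul_eq_mul]
    obtain ⟨h₁, h₁'⟩ := hb₁ x
    obtain ⟨h₂, h₂'⟩ := hb₂ x
    constructor <;> nlinarith
  · simp [hv₁ x hx, hv₂ x hx]

lemma convexHull_subset_wtSet {n r : ℕ} {Cs : Set (Tensor n r)} (h : Cs ⊆ adjSet n r) :
    convexHull ℝ Cs ⊆ wtSet n r :=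
  convexHull_min (h.trans adjSet_subset_wtSet) convex_wtSet

section EdgeEval

variable {n r : ℕ} {V : Type} [DecidableEq V]

lemma edgeEval_smul_add_smul (a b : ℝ) (X Y : Tensor n r) (φ : V → Fin n) (e : Finset V) :
    edgeEval (a • X + b • Y) φ e = a * edgeEval X φ e + b * edgeEval Y φ e := by
  unfold edgeEval
  split_ifs <;> simp [setEval]

lemma edgeEval_congr (Z : Tensor n r) {φ φ' : V → Fin n} {e : Finset V}
    (h : ∀ v ∈ e, φ v = φ' v) : edgeEval Z φ e = edgeEval Z φ' e := by
  rw [edgeEval, edgeEval, image_congr h]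

lemma edgeEval_eq_zero_or_one {A : Tensor n r} (hA : A ∈ adjSet n r) (φ : V → Fin n)
    (e : Finset V) : edgeEval A φ e = 0 ∨ edgeEval A φ e = 1 := by
  unfold edgeEval
  split_ifs
  exacts [hA.2.1 _, Or.inl rfl]

lemma edgeEval_eq_apply_comp {Z : Tensor n r} (hZ : Z ∈ wtSet n r) {k : Fin r → V} {e : Finset V}
    (he : univ.image k = e) (φ : V → Fin n) :
    edgeEval Z φ e = Z (φ ∘ k) := by
  have himage : e.image φ = univ.image (φ ∘ k) := by rw [← he, image_image]
  by_cases hinj : Injective (φ ∘ k)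
  · have hcard : #(e.image φ) = r := by
      rw [himage, card_image_of_injective _ hinj, card_univ, Fintype.card_fin]
    rw [edgeEval, dif_pos hcard, setEval]
    obtain ⟨σ, hσ⟩ := exists_perm_eq_comp_of_range_eq
      (f := fun i => ((e.image φ).orderIsoOfFin hcard i).1)
      (Subtype.val_injective.comp (OrderIso.injective _)) hinj (by
        simp only [coe_orderIsoOfFin_apply, range_orderEmbOfFin, himage, coe_image, coe_univ,
          Set.image_univ])
    rw [hσ, hZ.1]
  · rw [hZ.2.2 _ hinj, edgeEval, dif_neg]
    rw [himage]
    intro hcard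
    refine hinj (Set.injOn_univ.mp ?_)
    rw [← coe_univ]
    exact injOn_of_card_image_eq (by rw [hcard, card_univ, Fintype.card_fin])

end EdgeEval

section SignedCount

variable {n r : ℕ} {V : Type} [DecidableEq V] (sgn : Finset V → Bool)

noncomputable def signedEval (Z : Tensor n r) (φ : V → Fin n) (e : Finset V) : ℝ :=
  if sgn e then edgeEval Z φ e else 1 - edgeEval Z φ e

lemma signedEval_smul_add_smul {a b : ℝ} (hab : a + b = 1) (X Y : Tensor n r) (φ : V → Fin n)
    (e : Finset V) :
    signedEval sgn (a • X + b • Y) φ e = a * signedEval sgn X φ e + b * signedEval sgn Y φ e := by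
  unfold signedEval
  split_ifs
  · exact edgeEval_smul_add_smul a b X Y φ e
  · rw [edgeEval_smul_add_smul]
    linear_combination (-1 : ℝ) * hab

lemma signedEval_sub_signedEval (X Y : Tensor n r) (φ : V → Fin n) (e : Finset V) :
    signedEval sgn X φ e - signedEval sgn Y φ e =
      (if sgn e then 1 else -1) * (edgeEval X φ e - edgeEval Y φ e) := by
  unfold signedEval
  split_ifs <;> ring

lemma signedEval_congr (Z : Tensor n r) {φ φ' : V → Fin n} {e : Finset V}
    (h : ∀ v ∈ e, φ v = φ' v) : signedEval sgn Z φ e = signedEval sgn Z φ' e := by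
  rw [signedEval, signedEval, edgeEval_congr Z h]

lemma signedEval_eq_zero_or_one {A : Tensor n r} (hA : A ∈ adjSet n r) (φ : V → Fin n)
    (e : Finset V) : signedEval sgn A φ e = 0 ∨ signedEval sgn A φ e = 1 := by
  unfold signedEval
  rcases edgeEval_eq_zero_or_one hA φ e with h | h <;> split_ifs <;> simp [h]

variable [Fintype V]

noncomputable def shomOn (E₁ : Finset (Finset V)) (c : Finset V → Tensor n r) : ℝ :=
  ∑ φ : V → Fin n, ∏ e ∈ E₁, signedEval sgn (c e) φ e

lemma shomOn_sub_shomOn_update {E' : Finset (Finset V)} {e₀ : Finset V} (he₀ : e₀ ∈ E')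
    (c : Finset V → Tensor n r) (Z : Tensor n r) :
    shomOn sgn E' c - shomOn sgn E' (update c e₀ Z) =
      ∑ φ, (signedEval sgn (c e₀) φ e₀ - signedEval sgn Z φ e₀) *
        ∏ e ∈ E'.erase e₀, signedEval sgn (c e) φ e := by
  rw [shomOn, shomOn, ← sum_sub_distrib]
  refine sum_congr rfl fun φ _ => ?_
  rw [← mul_prod_erase E' _ he₀, ← mul_prod_erase E' _ he₀, update_self, sub_mul]
  congr 2
  exact prod_congr rfl fun e he => by rw [update_of_ne (ne_of_mem_erase he)]

/-- The sum is affine in each `c e`, so a bound over tensors of `Cs` persists over `conv Cs`. -/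
lemma abs_sum_mul_prod_signedEval_le_of_mem_convexHull {Cs : Set (Tensor n r)} {M : ℝ}
    (F : Finset (Finset V)) (g : (V → Fin n) → ℝ) (c : Finset V → Tensor n r)
    (hc : ∀ e ∈ F, c e ∈ convexHull ℝ Cs)
    (hA : ∀ A : Finset V → Tensor n r, (∀ e ∈ F, A e ∈ Cs) →
      |∑ φ, g φ * ∏ e ∈ F, signedEval sgn (A e) φ e| ≤ M) :
    |∑ φ, g φ * ∏ e ∈ F, signedEval sgn (c e) φ e| ≤ M := by
  induction F using Finset.induction_on generalizing g with
  | empty => exact hA c (by simp)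
  | @insert a F ha ih =>
    simp_rw [prod_insert ha, ← mul_assoc]
    refine ih (fun φ => g φ * signedEval sgn (c a) φ a)
      (fun e he => hc e (mem_insert_of_mem he)) fun A hAF => ?_
    have hconv : Convex ℝ {Z : Tensor n r |
        |∑ φ, g φ * signedEval sgn Z φ a * ∏ e ∈ F, signedEval sgn (A e) φ e| ≤ M} := by
      refine convex_setOf_abs_le (fun X Y s t hst => ?_) M
      simp only [signedEval_smul_add_smul sgn hst, mul_sum]
      rw [← sum_add_distrib]
      exact sum_congr rfl fun φ _ => by ring
    refine convexHull_min (fun Z hZ => ?_) hconv (hc a (mem_insert_self a F))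
    have h := hA (update A a Z) fun e he => by
      rcases mem_insert.mp he with rfl | he
      · rwa [update_self]
      · rw [update_of_ne (ne_of_mem_of_not_mem he ha)]
        exact hAF e he
    have hprod : ∀ φ, ∏ e ∈ insert a F, signedEval sgn (update A a Z e) φ e =
        signedEval sgn Z φ a * ∏ e ∈ F, signedEval sgn (A e) φ e := fun φ => by
      rw [prod_insert ha, update_self,
        prod_congr rfl fun e he => by rw [update_of_ne (ne_of_mem_of_not_mem he ha)]]
    simp_rw [hprod, ← mul_assoc] at h
    exact h

end SignedCount

lemma shomE_eq_shomOn {n r : ℕ} (H : RGraph r) (sgn : Finset H.V → Bool)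
    (E' : Finset (Finset H.V)) (Q : Tensor n r) :
    shomE H sgn E' Q = shomOn sgn E' fun _ => Q := rfl

lemma shomColl_eq_shomOn {n r : ℕ} (H : RGraph r) (sgn : Finset H.V → Bool)
    (P : {e // e ∈ H.E} → Tensor n r) :
    shomColl H sgn P = shomOn sgn H.E fun e => if h : e ∈ H.E then P ⟨e, h⟩ else 0 := by
  refine sum_congr rfl fun φ _ => ?_
  rw [← prod_coe_sort H.E]
  exact prod_congr rfl fun e _ => by simp [signedEval]

section TestTensors

variable {n r : ℕ} {p : ℝ} (Bw : WBase r)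

lemma testFun_nonneg (f : Factors n r) (x : Fin r → Fin n) : 0 ≤ testFun Bw f x :=
  prod_nonneg fun _ _ => by split_ifs <;> norm_num

lemma testNorm_nonneg (f : Factors n r) : 0 ≤ testNorm p Bw f :=
  (sum_nonneg fun _ _ => abs_nonneg _).trans (le_max_left _ _)

lemma abs_sum_mul_testFun_le (Z : Tensor n r) (f : Factors n r) :
    |∑ x, Z x * testFun Bw f x| ≤ dualNorm n p Bw Z * testNorm p Bw f := by
  by_cases hT : ∃ x, testFun Bw f x ≠ 0
  · obtain ⟨x₀, hx₀⟩ := hT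
    have hpos : 0 < testNorm p Bw f :=
      (abs_pos.mpr hx₀).trans_le <| (single_le_sum (fun x _ => abs_nonneg (testFun Bw f x))
        (mem_univ x₀)).trans (le_max_left _ _)
    have h := le_ciSup (Set.finite_range fun f : Factors n r =>
      if ∃ x, testFun Bw f x ≠ 0 then
        |∑ x, Z x * testFun Bw f x| / testNorm p Bw f else 0).bddAbove f
    rw [if_pos ⟨x₀, hx₀⟩, div_le_iff₀ hpos] at h
    exact h
  · push Not at hT
    simp only [hT, mul_zero, sum_const_zero, abs_zero]
    refine mul_nonneg (Real.iSup_nonneg fun f => ?_) (testNorm_nonneg Bw f)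
    split_ifs
    exacts [div_nonneg (abs_nonneg _) (testNorm_nonneg Bw f), le_rfl]

lemma testNorm_le_sum (hp : 0 ≤ p) (f : Factors n r) :
    testNorm p Bw f ≤ ∑ x, |testFun Bw f x| +
      ∑ b ∈ Bw.B, (n : ℝ) ^ (r - #b) * p ^ (Bw.dstar - Bw.d b) * facNorm1 f b := by
  have hterm : ∀ b ∈ Bw.B, 0 ≤ (n : ℝ) ^ (r - #b) * p ^ (Bw.dstar - Bw.d b) * facNorm1 f b :=
    fun b _ => by unfold facNorm1; positivity
  have hsup : (⨆ b ∈ Bw.B, (n : ℝ) ^ (r - #b) * p ^ (Bw.dstar - Bw.d b) * facNorm1 f b) ≤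
      ∑ b ∈ Bw.B, (n : ℝ) ^ (r - #b) * p ^ (Bw.dstar - Bw.d b) * facNorm1 f b :=
    Real.iSup_le (fun b => Real.iSup_le (fun hb => single_le_sum hterm hb) (sum_nonneg hterm))
      (sum_nonneg hterm)
  exact max_le (le_add_of_nonneg_right (sum_nonneg hterm))
    (hsup.trans (le_add_of_nonneg_left (sum_nonneg fun _ _ => abs_nonneg _)))

end TestTensors

section ProductFactors

variable {n r : ℕ} {J : Type*} (js : Finset J) (g : J → (Fin r → Fin n) → ℝ)
  (s : J → Finset (Fin r))

/-- `t_b(y)` holds iff some extension of `y` makes every `g j` with `s j ⊆ b` equal to one;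
when each `g j` depends only on the coordinates in `s j`, `t_b` is the product of these `g j`. -/
noncomputable def prodFactors : Factors n r := fun b y => decide (∃ x : Fin r → Fin n,
  (∀ i (hi : i ∈ b), x i = y ⟨i, hi⟩) ∧ ∀ j ∈ js, s j ⊆ b → g j x = 1)

variable {js g s}

lemma prodFactors_restrict_eq_true_iff
    (hdep : ∀ j ∈ js, ∀ x x', (∀ i ∈ s j, x i = x' i) → g j x = g j x')
    (b : Finset (Fin r)) (x : Fin r → Fin n) :
    prodFactors js g s b (fun i => x i.1) = true ↔ ∀ j ∈ js, s j ⊆ b → g j x = 1 := by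
  simp only [prodFactors, decide_eq_true_iff]
  constructor
  · rintro ⟨x', hx', h'⟩ j hj hjb
    rw [hdep j hj x x' fun i hi => (hx' i (hjb hi)).symm]
    exact h' j hj hjb
  · exact fun h => ⟨x, fun _ _ => rfl, h⟩

lemma testFun_prodFactors {Bw : WBase r} (hg : ∀ j ∈ js, ∀ x, g j x = 0 ∨ g j x = 1)
    (hdep : ∀ j ∈ js, ∀ x x', (∀ i ∈ s j, x i = x' i) → g j x = g j x')
    (hcov : ∀ j ∈ js, ∃ b ∈ Bw.B, s j ⊆ b) (x : Fin r → Fin n) :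
    testFun Bw (prodFactors js g s) x = ∏ j ∈ js, g j x := by
  rw [testFun, prod_boole, prod_eq_ite_of_zero_or_one fun j hj => hg j hj x]
  congr 1
  refine propext ⟨fun h j hj => ?_, fun h b _ =>
    (prodFactors_restrict_eq_true_iff hdep b x).mpr fun j hj _ => h j hj⟩
  obtain ⟨b, hb, hjb⟩ := hcov j hj
  exact (prodFactors_restrict_eq_true_iff hdep b x).mp (h b hb) j hj hjb

lemma pow_mul_facNorm1_prodFactors (hg : ∀ j ∈ js, ∀ x, g j x = 0 ∨ g j x = 1)
    (hdep : ∀ j ∈ js, ∀ x x', (∀ i ∈ s j, x i = x' i) → g j x = g j x') (b : Finset (Fin r)) :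
    (n : ℝ) ^ (r - #b) * facNorm1 (prodFactors js g s) b =
      ∑ x, ∏ j ∈ js with s j ⊆ b, g j x := by
  have h := sum_comp_restrict b fun y => if prodFactors js g s b y = true then (1 : ℝ) else 0
  rw [Fintype.card_fin, Fintype.card_fin] at h
  rw [facNorm1, ← sum_boole, ← h]
  refine sum_congr rfl fun x _ => ?_
  rw [prod_eq_ite_of_zero_or_one fun j hj => hg j (mem_filter.mp hj).1 x]
  congr 1
  exact propext ((prodFactors_restrict_eq_true_iff hdep b x).trans (by simp [mem_filter]))

lemma abs_sum_mul_prod_le_of_forall_testFun {p M : ℝ} (hp : 0 ≤ p) (hM : 0 ≤ M) (Bw : WBase r)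
    {D : Tensor n r}
    (hD : ∀ f : Factors n r, |∑ x, D x * testFun Bw f x| ≤ M * testNorm p Bw f)
    (hg : ∀ j ∈ js, ∀ x, g j x = 0 ∨ g j x = 1)
    (hdep : ∀ j ∈ js, ∀ x x', (∀ i ∈ s j, x i = x' i) → g j x = g j x')
    (hcov : ∀ j ∈ js, ∃ b ∈ Bw.B, s j ⊆ b) :
    |∑ x, D x * ∏ j ∈ js, g j x| ≤ M * (∑ x, ∏ j ∈ js, g j x +
      ∑ b ∈ Bw.B, p ^ (Bw.dstar - Bw.d b) * ∑ x, ∏ j ∈ js with s j ⊆ b, g j x) := by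
  have hT := testFun_prodFactors hg hdep hcov
  calc |∑ x, D x * ∏ j ∈ js, g j x| = |∑ x, D x * testFun Bw (prodFactors js g s) x| := by
        simp only [hT]
    _ ≤ M * testNorm p Bw (prodFactors js g s) := hD _
    _ ≤ M * (∑ x, |testFun Bw (prodFactors js g s) x| + ∑ b ∈ Bw.B,
          (n : ℝ) ^ (r - #b) * p ^ (Bw.dstar - Bw.d b) * facNorm1 (prodFactors js g s) b) := by
      gcongr
      exact testNorm_le_sum Bw hp _
    _ = _ := by
      congr 2
      · exact sum_congr rfl fun x _ => by rw [abs_of_nonneg (testFun_nonneg Bw _ x), hT]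
      · exact sum_congr rfl fun b _ => by
          rw [mul_comm ((n : ℝ) ^ _), mul_assoc, pow_mul_facNorm1_prodFactors hg hdep]

end ProductFactors

lemma abs_sum_comp_mul_prod_le_of_forall_testFun {V : Type*} [Fintype V] [DecidableEq V]
    {n r : ℕ} {p M : ℝ} (hp : 0 ≤ p) (hM : 0 ≤ M) (Bw : WBase r) {D : Tensor n r}
    (hD : ∀ f : Factors n r, |∑ x, D x * testFun Bw f x| ≤ M * testNorm p Bw f)
    {k : Fin r → V} (hk : Injective k) (E₁ : Finset (Finset V))
    (F : Finset V → (V → Fin n) → ℝ) (hF : ∀ e ∈ E₁, ∀ φ, F e φ = 0 ∨ F e φ = 1)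
    (hdep : ∀ e ∈ E₁, ∀ φ φ', (∀ v ∈ e, φ v = φ' v) → F e φ = F e φ')
    (hcov : ∀ e ∈ E₁, ∃ b ∈ Bw.B, ∀ i, k i ∈ e → i ∈ b) :
    |∑ φ, D (φ ∘ k) * ∏ e ∈ E₁, F e φ| ≤ M * (∑ φ, ∏ e ∈ E₁, F e φ +
      ∑ b ∈ Bw.B, p ^ (Bw.dstar - Bw.d b) * ∑ φ, ∏ e ∈ E₁ with ∀ i, k i ∈ e → i ∈ b, F e φ) := by
  obtain ⟨glue, hglue, hglue_off, hsum⟩ := exists_glue_of_injective (β := Fin n) hk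
  have hfiber : ∀ ψ, |∑ x, D x * ∏ e ∈ E₁, F e (glue x ψ)| ≤ M * (∑ x, ∏ e ∈ E₁, F e (glue x ψ) +
      ∑ b ∈ Bw.B, p ^ (Bw.dstar - Bw.d b) *
        ∑ x, ∏ e ∈ E₁ with ∀ i, k i ∈ e → i ∈ b, F e (glue x ψ)) := by
    intro ψ
    have hdep' : ∀ e ∈ E₁, ∀ x x', (∀ i ∈ univ.filter (k · ∈ e), x i = x' i) →
        F e (glue x ψ) = F e (glue x' ψ) := by
      refine fun e he x x' hxx' => hdep e he _ _ fun v hv => ?_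
      by_cases hvk : v ∈ Set.range k
      · obtain ⟨i, rfl⟩ := hvk
        rw [← comp_apply (f := glue x ψ), ← comp_apply (f := glue x' ψ), hglue, hglue]
        exact hxx' i (by simpa using hv)
      · rw [hglue_off _ _ _ hvk, hglue_off _ _ _ hvk]
    have h := abs_sum_mul_prod_le_of_forall_testFun (js := E₁) (g := fun e x => F e (glue x ψ))
      (s := fun e => univ.filter (k · ∈ e)) hp hM Bw hD (fun e he x => hF e he _) hdep'
      (fun e he => by simpa [subset_iff] using hcov e he)
    simpa [subset_iff] using h
  calc |∑ φ, D (φ ∘ k) * ∏ e ∈ E₁, F e φ|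
      = |∑ ψ, ∑ x, D x * ∏ e ∈ E₁, F e (glue x ψ)| := by rw [hsum]; simp only [hglue]
    _ ≤ ∑ ψ, |∑ x, D x * ∏ e ∈ E₁, F e (glue x ψ)| := abs_sum_le_sum_abs _ _
    _ ≤ ∑ ψ, M * (∑ x, ∏ e ∈ E₁, F e (glue x ψ) + ∑ b ∈ Bw.B, p ^ (Bw.dstar - Bw.d b) *
          ∑ x, ∏ e ∈ E₁ with ∀ i, k i ∈ e → i ∈ b, F e (glue x ψ)) := sum_le_sum fun ψ _ => hfiber ψ
    _ = _ := by
      rw [hsum, ← mul_sum, sum_add_distrib, sum_comm (s := univ) (t := Bw.B)]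
      simp only [← mul_sum]
      exact congrArg _ (congrArg _ (sum_congr rfl fun b _ => by rw [hsum]))

lemma card_filter_le_of_not_subset {V : Type} [DecidableEq V] {E E' : Finset (Finset V)}
    (hE' : E' ⊆ E) (q : Finset V → Bool) {e₀ β : Finset V} (hβ : ¬e₀ ⊆ β) :
    #(E'.filter fun e => q e = true) ≤
      1 + (edeg (E.filter fun e => q e = true) e₀ - edegSub (E.filter fun e => q e = true) β e₀) +
        #(((E'.erase e₀).filter fun e => e ∩ e₀ ⊆ β).filter fun e => q e = true) := by
  set P := E.filter fun e => q e = true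
  set S₁ := P.filter fun e => e ≠ e₀ ∧ (e ∩ e₀).Nonempty
  set S₂ := P.filter fun e => (e ∩ e₀).Nonempty ∧ e ∩ e₀ ⊆ β
  have hS : S₂ ⊆ S₁ := by
    intro e he
    obtain ⟨hP, hne, hsub⟩ := mem_filter.mp he
    refine mem_filter.mpr ⟨hP, ?_, hne⟩
    rintro rfl
    exact hβ (by simpa using hsub)
  have hcover : E'.filter (fun e => q e = true) ⊆ insert e₀ (S₁ \ S₂) ∪
      ((E'.erase e₀).filter fun e => e ∩ e₀ ⊆ β).filter fun e => q e = true := by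
    intro e he
    obtain ⟨heE', hq⟩ := mem_filter.mp he
    by_cases he₀ : e = e₀
    · simp [he₀]
    by_cases hsub : e ∩ e₀ ⊆ β
    · simp [heE', he₀, hsub, hq]
    have hne : (e ∩ e₀).Nonempty :=
      nonempty_iff_ne_empty.mpr fun h => hsub (h ▸ empty_subset β)
    simp [S₁, S₂, P, hE' heE', hq, he₀, hne, hsub]
  have h := (card_le_card hcover).trans (card_union_le _ _)
  have h' := card_insert_le e₀ (S₁ \ S₂)
  rw [card_sdiff_of_subset hS] at h'
  change _ ≤ 1 + (#S₁ - #S₂) + _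
  omega

namespace BaseSystem

variable {r : ℕ} {H : RGraph r} (S : BaseSystem H)

lemma image_emb (e : {e // e ∈ H.E}) : univ.image (S.emb e) = e.1 :=
  eq_of_subset_of_card_le (fun v hv => by
      obtain ⟨i, -, rfl⟩ := mem_image.mp hv
      exact S.emb_mem e i)
    (by rw [card_image_of_injective _ (S.emb_inj e), card_univ, Fintype.card_fin,
      H.card_edge e.1 e.2])

lemma inter_subset_vimage_iff (e : {e // e ∈ H.E}) (b : Finset (Fin r)) (e' : Finset H.V) :
    e' ∩ e.1 ⊆ S.vimage e b ↔ ∀ i, S.emb e i ∈ e' → i ∈ b := by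
  constructor
  · intro h i hi
    obtain ⟨j, hj, hji⟩ := mem_image.mp (h (mem_inter.mpr ⟨hi, S.emb_mem e i⟩))
    exact S.emb_inj e hji ▸ hj
  · intro h v hv
    obtain ⟨hv', hve⟩ := mem_inter.mp hv
    rw [← S.image_emb e] at hve
    obtain ⟨i, -, rfl⟩ := mem_image.mp hve
    exact mem_image_of_mem _ (h i hv')

lemma not_subset_vimage (hS : S.Good) (e : {e // e ∈ H.E}) {b : Finset (Fin r)}
    (hb : b ∈ S.B e) : ¬e.1 ⊆ S.vimage e b := fun h => by
  have hlt : #b < r := by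
    simpa using card_lt_card (ssubset_univ_iff.mpr ((hS e).2.1 b hb))
  have := (card_le_card h).trans card_image_le
  rw [H.card_edge e.1 e.2] at this
  omega

end BaseSystem

lemma abs_sum_sub_mul_testFun_le {n r : ℕ} {H : RGraph r} (S : BaseSystem H)
    (E₀ : Finset (Finset H.V)) {p δ : ℝ} {Cs : Set (Tensor n r)}
    (hdiam : ∀ A₁ ∈ Cs, ∀ A₂ ∈ Cs, bsDualNorm S E₀ p (fun x => A₁ x - A₂ x) ≤ δ)
    (e : {e // e ∈ H.E}) {X Y : Tensor n r} (hX : X ∈ convexHull ℝ Cs)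
    (hY : Y ∈ convexHull ℝ Cs) (f : Factors n r) :
    |∑ x, (X x - Y x) * testFun (S.wb E₀ e) f x| ≤ δ * testNorm p (S.wb E₀ e) f := by
  let ℓ : Tensor n r →ₗ[ℝ] ℝ :=
    { toFun := fun Z => ∑ x, Z x * testFun (S.wb E₀ e) f x
      map_add' := fun Z₁ Z₂ => by simp [add_mul, sum_add_distrib]
      map_smul' := fun a Z => by simp [mul_sum, mul_assoc] }
  refine abs_map_sub_le_of_mem_convexHull ℓ (fun A₁ h₁ A₂ h₂ => ?_) hX hY
  refine (abs_sum_mul_testFun_le _ _ f).trans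
    (mul_le_mul_of_nonneg_right ?_ (testNorm_nonneg _ f))
  exact (le_ciSup (Set.finite_range _).bddAbove e).trans (hdiam A₁ h₁ A₂ h₂)

section Swap

variable {n r : ℕ} {H : RGraph r} (sgn : Finset H.V → Bool) {S : BaseSystem H}

lemma abs_sum_comp_mul_prod_signedEval_le (hS : S.Good) (E₀ : Finset (Finset H.V))
    (e : {e // e ∈ H.E}) {p M : ℝ} (hp : 0 ≤ p) (hM : 0 ≤ M) {D : Tensor n r}
    (hD : ∀ f, |∑ x, D x * testFun (S.wb E₀ e) f x| ≤ M * testNorm p (S.wb E₀ e) f)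
    {E₁ : Finset (Finset H.V)} (hE₁ : E₁ ⊆ H.E) (he : e.1 ∉ E₁) {A : Finset H.V → Tensor n r}
    (hA : ∀ e' ∈ E₁, A e' ∈ adjSet n r) :
    |∑ φ, D (φ ∘ S.emb e) * ∏ e' ∈ E₁, signedEval sgn (A e') φ e'| ≤
      M * (shomOn sgn E₁ A + ∑ b ∈ S.B e, p ^ ((S.wb E₀ e).dstar - (S.wb E₀ e).d b) *
        shomOn sgn (E₁.filter fun e' => e' ∩ e.1 ⊆ S.vimage e b) A) := by
  have h := abs_sum_comp_mul_prod_le_of_forall_testFun hp hM (S.wb E₀ e) hD (S.emb_inj e) E₁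
    (fun e' φ => signedEval sgn (A e') φ e')
    (fun e' he' φ => signedEval_eq_zero_or_one sgn (hA e' he') φ e')
    (fun e' _ φ φ' h => signedEval_congr sgn _ h) fun e' he' => ?_
  · have hfilter : ∀ b, (E₁.filter fun e' => e' ∩ e.1 ⊆ S.vimage e b) =
        E₁.filter fun e' => ∀ i, S.emb e i ∈ e' → i ∈ b :=
      fun b => filter_congr fun e' _ => S.inter_subset_vimage_iff e b e'
    simp only [shomOn, hfilter]
    exact h
  · obtain ⟨b, hb, hsub⟩ := (hS e).2.2.2 e' (hE₁ he') (ne_of_mem_of_not_mem he' he)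
    exact ⟨b, hb, (S.inter_subset_vimage_iff e b e').mp hsub⟩

lemma mul_add_sum_shomOn_le (hS : S.Good) (e : {e // e ∈ H.E}) {E' : Finset (Finset H.V)}
    (hE' : E' ⊆ H.E) {p ε K : ℝ} (hp0 : 0 ≤ p) (hp1 : p ≤ 1) (hε : 0 ≤ ε) (hK : 0 ≤ K)
    {A : Finset H.V → Tensor n r}
    (hG : ∀ E'' ⊆ E'.erase e.1, shomOn sgn E'' A ≤ K * p ^ #(E''.filter fun e => sgn e = true)) :
    ε * p * (shomOn sgn (E'.erase e.1) A + ∑ b ∈ S.B e,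
      p ^ ((S.wb (H.E.filter fun e => sgn e = true) e).dstar -
        (S.wb (H.E.filter fun e => sgn e = true) e).d b) *
        shomOn sgn ((E'.erase e.1).filter fun e' => e' ∩ e.1 ⊆ S.vimage e b) A) ≤
      (1 + 2 ^ r) * ε * K * p ^ #(E'.filter fun e => sgn e = true) := by
  set P := #(E'.filter fun e => sgn e = true)
  have hpow : ∀ a, P ≤ 1 + a → K * (p * p ^ a) ≤ K * p ^ P := fun a ha => by
    rw [← pow_succ']
    exact mul_le_mul_of_nonneg_left (pow_le_pow_of_le_one hp0 hp1 (by omega)) hK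
  have h₀ : p * shomOn sgn (E'.erase e.1) A ≤ K * p ^ P := by
    refine (mul_le_mul_of_nonneg_left (hG _ subset_rfl) hp0).trans ?_
    rw [mul_left_comm]
    refine hpow _ ?_
    have := pred_card_le_card_erase (s := E'.filter fun e => sgn e = true) (a := e.1)
    rw [filter_erase]
    omega
  have hb : ∀ b ∈ S.B e, p * (p ^ ((S.wb (H.E.filter fun e => sgn e = true) e).dstar -
      (S.wb (H.E.filter fun e => sgn e = true) e).d b) *
      shomOn sgn ((E'.erase e.1).filter fun e' => e' ∩ e.1 ⊆ S.vimage e b) A) ≤ K * p ^ P := by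
    intro b hb
    refine (mul_le_mul_of_nonneg_left (mul_le_mul_of_nonneg_left (hG _ (filter_subset _ _))
      (pow_nonneg hp0 _)) hp0).trans ?_
    rw [show ∀ m a : ℕ, p * (p ^ m * (K * p ^ a)) = K * (p * p ^ (m + a)) from
      fun m a => by ring]
    exact hpow _ (by
      have := card_filter_le_of_not_subset hE' sgn (S.not_subset_vimage hS e hb)
      simp only [BaseSystem.wb]
      omega)
  have hB : (#(S.B e) : ℝ) ≤ 2 ^ r := by
    exact_mod_cast (card_le_univ _).trans_eq (by simp)
  calc _ = ε * (p * shomOn sgn (E'.erase e.1) A + ∑ b ∈ S.B e, p * (p ^ _ * _)) := by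
        rw [← mul_sum]; ring
    _ ≤ ε * (K * p ^ P + ∑ b ∈ S.B e, K * p ^ P) :=
        mul_le_mul_of_nonneg_left (add_le_add h₀ (sum_le_sum hb)) hε
    _ = ε * ((1 + #(S.B e)) * (K * p ^ P)) := by rw [sum_const, nsmul_eq_mul]; ring
    _ ≤ ε * ((1 + 2 ^ r) * (K * p ^ P)) := by gcongr
    _ = _ := by ring

theorem abs_shomOn_sub_shomOn_update_le (hS : S.Good) {Cs : Set (Tensor n r)}
    (hCs : Cs ⊆ adjSet n r) {p ε K : ℝ} (hp0 : 0 ≤ p) (hp1 : p ≤ 1) (hε : 0 ≤ ε) (hK : 0 ≤ K)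
    (hdiam : ∀ A₁ ∈ Cs, ∀ A₂ ∈ Cs,
      bsDualNorm S (H.E.filter fun e => sgn e = true) p (fun x => A₁ x - A₂ x) ≤ ε * p)
    {E' : Finset (Finset H.V)} (hE' : E' ⊆ H.E) {e₀ : Finset H.V} (he₀ : e₀ ∈ E')
    (hG : ∀ E'' ⊆ E'.erase e₀, ∀ A : Finset H.V → Tensor n r, (∀ e ∈ E'', A e ∈ Cs) →
      shomOn sgn E'' A ≤ K * p ^ #(E''.filter fun e => sgn e = true))
    {c : Finset H.V → Tensor n r} (hc : ∀ e ∈ E', c e ∈ convexHull ℝ Cs) {Z : Tensor n r}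
    (hZ : Z ∈ convexHull ℝ Cs) :
    |shomOn sgn E' c - shomOn sgn E' (update c e₀ Z)| ≤
      (1 + 2 ^ r) * ε * K * p ^ #(E'.filter fun e => sgn e = true) := by
  let e : {e // e ∈ H.E} := ⟨e₀, hE' he₀⟩
  have himg : univ.image (S.emb e) = e₀ := S.image_emb e
  have hwt := convexHull_subset_wtSet hCs
  have hdiff : |shomOn sgn E' c - shomOn sgn E' (update c e₀ Z)| =
      |∑ φ, (fun x => c e₀ x - Z x) (φ ∘ S.emb e) *
        ∏ e' ∈ E'.erase e₀, signedEval sgn (c e') φ e'| := by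
    rw [shomOn_sub_shomOn_update sgn he₀]
    simp_rw [signedEval_sub_signedEval, edgeEval_eq_apply_comp (hwt (hc e₀ he₀)) himg,
      edgeEval_eq_apply_comp (hwt hZ) himg, mul_assoc, ← mul_sum, abs_mul]
    split_ifs <;> simp
  rw [hdiff]
  refine abs_sum_mul_prod_signedEval_le_of_mem_convexHull sgn _ _ c
    (fun e' he' => hc e' (mem_of_mem_erase he')) fun A hA => ?_
  refine (abs_sum_comp_mul_prod_signedEval_le sgn hS _ e hp0 (by positivity)
    (abs_sum_sub_mul_testFun_le S _ hdiam e (hc e₀ he₀) hZ) ((erase_subset _ _).trans hE')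
    (notMem_erase e₀ E') fun e' he' => hCs (hA e' he')).trans ?_
  exact mul_add_sum_shomOn_le sgn hS e hE' hp0 hp1 hε hK fun E'' hE'' =>
    hG E'' hE'' A fun e' he' => hA e' (hE'' he')

end Swap

lemma abs_sub_le_card_mul_of_update {ι X : Type*} [DecidableEq ι] (G : (ι → X) → ℝ) {T : Set X}
    {F : Finset ι} {δ : ℝ}
    (hδ : ∀ c, (∀ i ∈ F, c i ∈ T) → ∀ a ∈ F, ∀ z ∈ T, |G c - G (update c a z)| ≤ δ)
    {c c' : ι → X} (hc : ∀ i ∈ F, c i ∈ T) (hc' : ∀ i ∈ F, c' i ∈ T)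
    (hcc' : ∀ i ∉ F, c i = c' i) : |G c - G c'| ≤ #F * δ := by
  suffices h : ∀ D ⊆ F, ∀ c, (∀ i ∈ F, c i ∈ T) → (∀ i ∉ D, c i = c' i) →
      |G c - G c'| ≤ #D * δ from h F subset_rfl c hc hcc'
  intro D
  induction D using Finset.induction_on with
  | empty =>
    intro _ c _ h
    rw [funext fun i => h i (notMem_empty i)]
    simp
  | @insert a D ha ih =>
    intro hD c hc hcc'
    have hupd : ∀ i ∉ D, update c a (c' a) i = c' i := fun i hi => by
      by_cases hia : i = a
      · rw [hia, update_self]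
      · rw [update_of_ne hia, hcc' i (by simp [hia, hi])]
    have hT : ∀ i ∈ F, update c a (c' a) i ∈ T := fun i hi => by
      by_cases hia : i = a
      · rw [hia, update_self]; exact hc' a (hD (mem_insert_self a D))
      · rw [update_of_ne hia]; exact hc i hi
    calc |G c - G c'| ≤ |G c - G (update c a (c' a))| + |G (update c a (c' a)) - G c'| :=
          abs_sub_le _ _ _
      _ ≤ δ + #D * δ := add_le_add (hδ c hc a (hD (mem_insert_self a D)) _
          (hc' a (hD (mem_insert_self a D))))
          (ih ((subset_insert a D).trans hD) _ hT hupd)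
      _ = #(insert a D) * δ := by rw [card_insert_of_notMem ha]; push_cast; ring

theorem abs_shomOn_sub_le_of_forall_erase {n r : ℕ} {H : RGraph r} (sgn : Finset H.V → Bool)
    {S : BaseSystem H} (hS : S.Good) {Cs : Set (Tensor n r)} (hCs : Cs ⊆ adjSet n r)
    {p ε K : ℝ} (hp0 : 0 ≤ p) (hp1 : p ≤ 1) (hε : 0 ≤ ε) (hK : 0 ≤ K)
    (hdiam : ∀ A₁ ∈ Cs, ∀ A₂ ∈ Cs,
      bsDualNorm S (H.E.filter fun e => sgn e = true) p (fun x => A₁ x - A₂ x) ≤ ε * p)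
    {E' : Finset (Finset H.V)} (hE' : E' ⊆ H.E)
    (hG : ∀ e₀ ∈ E', ∀ E'' ⊆ E'.erase e₀, ∀ A : Finset H.V → Tensor n r, (∀ e ∈ E'', A e ∈ Cs) →
      shomOn sgn E'' A ≤ K * p ^ #(E''.filter fun e => sgn e = true))
    {c c' : Finset H.V → Tensor n r} (hc : ∀ e ∈ E', c e ∈ convexHull ℝ Cs)
    (hc' : ∀ e ∈ E', c' e ∈ convexHull ℝ Cs) :
    |shomOn sgn E' c - shomOn sgn E' c'| ≤
      #E' * ((1 + 2 ^ r) * ε * K * p ^ #(E'.filter fun e => sgn e = true)) := by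
  have hcongr : shomOn sgn E' (fun e => if e ∈ E' then c' e else c e) = shomOn sgn E' c' :=
    sum_congr rfl fun φ _ => prod_congr rfl fun e he => by simp [he]
  rw [← hcongr]
  exact abs_sub_le_card_mul_of_update (shomOn sgn E')
    (fun c₁ hc₁ a ha z hz => abs_shomOn_sub_shomOn_update_le sgn hS hCs hp0 hp1 hε hK hdiam hE'
      ha (hG a ha) hc₁ hz)
    hc (fun e he => by simpa [he] using hc' e he) fun e he => by simp [he]

/-- At most `m` single-edge swaps, each costing `1 + |B| ≤ 1 + 2^r` subgraph counts that are
bounded, by induction, with the constant `1 + countConst r m k`. -/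
def countConst (r m : ℕ) : ℕ → ℕ
  | 0 => 0
  | k + 1 => m * (1 + 2 ^ r) * (1 + countConst r m k)

theorem abs_shomOn_sub_le {n r : ℕ} {H : RGraph r} (sgn : Finset H.V → Bool) {S : BaseSystem H}
    (hS : S.Good) {p ε L : ℝ} (hp0 : 0 ≤ p) (hp1 : p ≤ 1) (hε0 : 0 ≤ ε) (hε1 : ε ≤ 1)
    (hL : 0 ≤ L) {Cs : Set (Tensor n r)} (hCs : Cs ⊆ adjSet n r)
    (hdiam : ∀ A₁ ∈ Cs, ∀ A₂ ∈ Cs,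
      bsDualNorm S (H.E.filter fun e => sgn e = true) p (fun x => A₁ x - A₂ x) ≤ ε * p)
    {Q₀ : Tensor n r} (hQ₀m : Q₀ ∈ convexHull ℝ Cs)
    (hQ₀ : ∀ E' ⊆ H.E, E' ≠ H.E →
      shomE H sgn E' Q₀ ≤
        L * (n : ℝ) ^ Fintype.card H.V * p ^ (E'.filter fun e => sgn e = true).card) (k : ℕ) :
    ∀ E' ⊆ H.E, #E' ≤ k → ∀ c c' : Finset H.V → Tensor n r,
      (∀ e ∈ E', c e ∈ convexHull ℝ Cs) → (∀ e ∈ E', c' e ∈ convexHull ℝ Cs) →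
      |shomOn sgn E' c - shomOn sgn E' c'| ≤ countConst r #H.E k *
        (L * ε * (n : ℝ) ^ Fintype.card H.V * p ^ #(E'.filter fun e => sgn e = true)) := by
  set N := (n : ℝ) ^ Fintype.card H.V
  have hN : 0 ≤ N := by positivity
  induction k with
  | zero =>
    intro E' _ hE' c c' _ _
    simp [card_eq_zero.mp (Nat.le_zero.mp hE'), shomOn, countConst]
  | succ k ih =>
    intro E' hE' hcard c c' hc hc'
    set K : ℝ := (countConst r #H.E k : ℝ)
    have hK : 0 ≤ K := Nat.cast_nonneg _
    -- Subgraphs missing an edge are controlled through `Q₀`, by induction.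
    have hG : ∀ e₀ ∈ E', ∀ E'' ⊆ E'.erase e₀, ∀ A : Finset H.V → Tensor n r,
        (∀ e ∈ E'', A e ∈ Cs) →
          shomOn sgn E'' A ≤ (1 + K) * L * N * p ^ #(E''.filter fun e => sgn e = true) := by
      intro e₀ he₀ E'' hE'' A hA
      have hsub : E'' ⊆ H.E := hE''.trans ((erase_subset _ _).trans hE')
      have hne : E'' ≠ H.E := fun h => notMem_erase e₀ E' (hE'' (h ▸ hE' he₀))
      have hcard'' : #E'' ≤ k := by
        have := (card_le_card hE'').trans_eq (card_erase_of_mem he₀)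
        omega
      have hdiff := (abs_sub_le_iff.mp (ih E'' hsub hcard'' A (fun _ => Q₀)
        (fun e he => subset_convexHull ℝ Cs (hA e he)) fun _ _ => hQ₀m)).1
      have hpow : 0 ≤ L * N * p ^ #(E''.filter fun e => sgn e = true) := by positivity
      have := hQ₀ E'' hsub hne
      rw [shomE_eq_shomOn] at this
      nlinarith [mul_le_mul_of_nonneg_left (mul_le_of_le_one_left hpow hε1) hK]
    refine (abs_shomOn_sub_le_of_forall_erase sgn hS hCs hp0 hp1 hε0 (by positivity) hdiam hE'
      hG hc hc').trans ?_
    have hcardE : (#E' : ℝ) ≤ #H.E := by exact_mod_cast card_le_card hE'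
    calc _ ≤ (#H.E : ℝ) * ((1 + 2 ^ r) * ε * ((1 + K) * L * N) *
          p ^ #(E'.filter fun e => sgn e = true)) := by gcongr
      _ = _ := by simp only [countConst, K]; push_cast; ring

theorem statement3_general (r : ℕ) (H : RGraph r) (sgn : Finset H.V → Bool) :
    ∃ C : ℝ, 0 < C ∧
      ∀ n : ℕ, 1 ≤ n → ∀ p : ℝ, 0 < p → p < 1 →
      ∀ S : BaseSystem H, S.Good → ∀ ε : ℝ, 0 < ε → ε ≤ 1 →
      ∀ Cs : Set (Tensor n r), Cs ⊆ adjSet n r →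
      (∀ A₁ ∈ Cs, ∀ A₂ ∈ Cs,
        bsDualNorm S (H.E.filter fun e => sgn e = true) p (fun x => A₁ x - A₂ x) ≤ ε * p) →
      ∀ L : ℝ, 1 ≤ L → ∀ Q₀ ∈ convexHull ℝ Cs,
      (∀ E' ⊆ H.E, E' ≠ H.E →
        shomE H sgn E' Q₀ ≤
          L * (n : ℝ) ^ Fintype.card H.V * p ^ (E'.filter fun e => sgn e = true).card) →
      ∀ P Q : {e // e ∈ H.E} → Tensor n r,
      (∀ e, P e ∈ convexHull ℝ Cs) → (∀ e, Q e ∈ convexHull ℝ Cs) →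
      |shomColl H sgn P - shomColl H sgn Q| ≤
        C * L * ε * (n : ℝ) ^ Fintype.card H.V *
          p ^ (H.E.filter fun e => sgn e = true).card := by
  refine ⟨countConst r #H.E #H.E + 1, by positivity, ?_⟩
  intro n _ p hp0 hp1 S hS ε hε0 hε1 Cs hCs hdiam L hL Q₀ hQ₀m hQ₀ P Q hP hQ
  rw [shomColl_eq_shomOn, shomColl_eq_shomOn]
  refine (abs_shomOn_sub_le sgn hS hp0.le hp1.le hε0.le hε1 (by linarith) hCs hdiam hQ₀m hQ₀
    #H.E H.E subset_rfl le_rfl _ _ (fun e he => by simpa [he] using hP ⟨e, he⟩)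
    fun e he => by simpa [he] using hQ ⟨e, he⟩).trans ?_
  have : 0 ≤ L * ε * (n : ℝ) ^ Fintype.card H.V * p ^ #(H.E.filter fun e => sgn e = true) := by
    have : 0 ≤ L := by linarith
    positivity
  nlinarith

theorem statement3 (r : ℕ) (hr : 2 ≤ r) (H : RGraph r) (sgn : Finset H.V → Bool) :
    ∃ C : ℝ, 0 < C ∧
      ∀ n : ℕ, 1 ≤ n → ∀ p : ℝ, 0 < p → p < 1 →
      ∀ S : BaseSystem H, S.Good → ∀ ε : ℝ, 0 < ε → ε ≤ 1 →
      ∀ Cs : Set (Tensor n r), Cs ⊆ adjSet n r →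
      (∀ A₁ ∈ Cs, ∀ A₂ ∈ Cs,
        bsDualNorm S (H.E.filter fun e => sgn e = true) p (fun x => A₁ x - A₂ x) ≤ ε * p) →
      ∀ L : ℝ, 1 ≤ L → ∀ Q₀ ∈ convexHull ℝ Cs,
      (∀ E' ⊆ H.E, E' ≠ H.E →
        shomE H sgn E' Q₀ ≤
          L * (n : ℝ) ^ Fintype.card H.V * p ^ (E'.filter fun e => sgn e = true).card) →
      ∀ P Q : {e // e ∈ H.E} → Tensor n r,
      (∀ e, P e ∈ convexHull ℝ Cs) → (∀ e, Q e ∈ convexHull ℝ Cs) →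
      |shomColl H sgn P - shomColl H sgn Q| ≤
        C * L * ε * (n : ℝ) ^ Fintype.card H.V *
          p ^ (H.E.filter fun e => sgn e = true).card :=
  statement3_general r H sgn
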